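/- arXiv:2501.00567 — 6 statements merged into one kernel-verified Lean document; each statement's English description precedes it below -/
import Mathlib

section
/- Let G be a finite triangle-free simple graph, let w : V(G) → ℝ be a weight function with w(v) > 0 for every vertex v and total weight w(V(G)) = 1, and let ε ∈ (0,1). Define w'(y) = w(y)·exp(ε·w(N_G(y))) for every vertex y, and for a vertex x let G_x denote the induced subgraph of G obtained by deleting x together with all its neighbors. Then for every vertex v of G: ((1−ε)·w'(N_G(v)) + Σ_{x ∈ V(G)\({v} ∪ N_G(v))} ε·w(x)·w'(N_{G_x}(v))) / (w'(v)·(1 − ε·w({v} ∪ N_G(v)))) ≤ (w(N_G(v))/w(v))·exp(ε·(w(v) − w(N_G(v)))). -/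
/-!
Swapping the double sum turns the numerator into
`∑_{y ∈ N(v)} w'(y) · (1 - ε + ε · w(V ∖ (N[v] ∪ N[y])))`. For `y ∈ N(v)` triangle-freeness makes
`N(v)` and `N(y)` disjoint, so the bracket is `c - ε · w(N(y))` with `c = 1 - ε · w(N(v))`, and the
summand is `w(y) · f(ε · w(N(y)))` for `f(t) = eᵗ (c - t)`. This `f` decreases on `[c - 1, ∞)` and
`w(N(y)) ≥ w(v)`, so the summand is at most `w(y) · e^{ε w(v)} (1 - ε · w(N[v]))`; summing over
`y ∈ N(v)` gives exactly the right-hand side times the denominator.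
-/

open Finset

theorem Real.antitoneOn_exp_mul_sub (c : ℝ) :
    AntitoneOn (fun t => Real.exp t * (c - t)) (Set.Ici (c - 1)) := by
  refine antitoneOn_of_deriv_nonpos (convex_Ici _) (by fun_prop) (by fun_prop) fun t ht => ?_
  rw [interior_Ici, Set.mem_Ioi] at ht
  have hderiv : deriv (fun t => Real.exp t * (c - t)) t = Real.exp t * (c - 1 - t) := by
    rw [deriv_fun_mul (by fun_prop) (by fun_prop), Real.deriv_exp, deriv_const_sub, deriv_id'']
    ring
  rw [hderiv]
  exact mul_nonpos_of_nonneg_of_nonpos (Real.exp_pos t).le (by linarith)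

namespace SimpleGraph

variable {V : Type*} (G : SimpleGraph V) [DecidableEq V] [Fintype V] [DecidableRel G.Adj]

theorem mem_insert_neighborFinset_comm {x y : V} :
    y ∈ insert x (G.neighborFinset x) ↔ x ∈ insert y (G.neighborFinset y) := by
  simp only [mem_insert, mem_neighborFinset, eq_comm (a := x), G.adj_comm x]

theorem sum_mul_sum_sdiff_insert_neighborFinset {R : Type*} [CommSemiring R]
    (s t : Finset V) (f g : V → R) :
    ∑ x ∈ s, g x * ∑ y ∈ t \ insert x (G.neighborFinset x), f y =
      ∑ y ∈ t, f y * ∑ x ∈ s \ insert y (G.neighborFinset y), g x := by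
  simp_rw [mul_sum, mul_comm (f _)]
  refine sum_comm' fun x y => ?_
  simp only [mem_sdiff, G.mem_insert_neighborFinset_comm (x := x) (y := y)]
  tauto

theorem sdiff_insert_neighborFinset_sdiff_insert_neighborFinset {v y : V} (h : G.Adj v y)
    (s : Finset V) :
    (s \ insert v (G.neighborFinset v)) \ insert y (G.neighborFinset y) =
      s \ (G.neighborFinset v ∪ G.neighborFinset y) := by
  ext x
  simp only [mem_sdiff, mem_insert, mem_union, mem_neighborFinset]
  grind [G.adj_symm, G.loopless]

theorem disjoint_neighborFinset_of_adj (hG : G.CliqueFree 3) {v y : V} (h : G.Adj v y) :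
    Disjoint (G.neighborFinset v) (G.neighborFinset y) := by
  refine Finset.disjoint_left.2 fun u hv hy => ?_
  rw [mem_neighborFinset] at hv hy
  exact hG {v, y, u} (is3Clique_triple_iff.2 ⟨h, hv, hy⟩)

theorem sum_sdiff_insert_neighborFinset_sdiff_insert_neighborFinset {R : Type*}
    [AddCommGroup R] (hG : G.CliqueFree 3) {v y : V} (h : G.Adj v y) (w : V → R) :
    ∑ x ∈ (univ \ insert v (G.neighborFinset v)) \ insert y (G.neighborFinset y), w x =
      ∑ x, w x - ∑ u ∈ G.neighborFinset v, w u - ∑ u ∈ G.neighborFinset y, w u := by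
  rw [G.sdiff_insert_neighborFinset_sdiff_insert_neighborFinset h,
    sum_sdiff_eq_sub (subset_univ _), sum_union (G.disjoint_neighborFinset_of_adj hG h),
    sub_add_eq_sub_sub]

theorem neighbor_contribution_le (hG : G.CliqueFree 3) (w : V → ℝ) (hw : ∀ u, 0 ≤ w u)
    (hw1 : ∑ u, w u = 1) {ε : ℝ} (hε : 0 ≤ ε) {v y : V} (h : G.Adj v y) :
    w y * Real.exp (ε * ∑ u ∈ G.neighborFinset y, w u) *
        (1 - ε + ε * ∑ x ∈ (univ \ insert v (G.neighborFinset v)) \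
          insert y (G.neighborFinset y), w x) ≤
      w y * (Real.exp (ε * w v) * (1 - ε * (w v + ∑ u ∈ G.neighborFinset v, w u))) := by
  rw [G.sum_sdiff_insert_neighborFinset_sdiff_insert_neighborFinset hG h, hw1, mul_assoc]
  set W := ∑ u ∈ G.neighborFinset v, w u
  set T := ∑ u ∈ G.neighborFinset y, w u
  have hvT : w v ≤ T := single_le_sum (fun u _ => hw u) ((G.mem_neighborFinset y v).2 h.symm)
  have hW : 0 ≤ W := sum_nonneg fun u _ => hw u
  have hmono := Real.antitoneOn_exp_mul_sub (1 - ε * W)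
    (a := ε * w v) (b := ε * T) (by simp only [Set.mem_Ici]; nlinarith [hw v])
    (by simp only [Set.mem_Ici]; nlinarith [hw v]) (mul_le_mul_of_nonneg_left hvT hε)
  refine mul_le_mul_of_nonneg_left ?_ (hw y)
  convert hmono using 2 <;> ring

end SimpleGraph

/-- the Claim in the proof of the key technical theorem: bound on the
weighted neighborhood expression for a triangle-free graph with normalized positive
weights. Here `w' y = w y · exp(ε · w(N_G(y)))` and, for a vertex `x`, the neighbors of
`v` in `G_x = G − ({x} ∪ N_G(x))` are the neighbors of `v` in `G` outside
`{x} ∪ N_G(x)`. -/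
theorem claim_neighborhood_weight_bound {V : Type*} [Fintype V] [DecidableEq V]
    (G : SimpleGraph V) [DecidableRel G.Adj] (hG : G.CliqueFree 3)
    (w : V → ℝ) (hw : ∀ v, 0 < w v) (hw1 : ∑ v : V, w v = 1)
    (ε : ℝ) (hε : 0 < ε) (hε1 : ε < 1)
    (w' : V → ℝ)
    (hw' : ∀ y : V, w' y = w y * Real.exp (ε * ∑ u ∈ G.neighborFinset y, w u))
    (v : V) :
    ((1 - ε) * (∑ y ∈ G.neighborFinset v, w' y) +
        ∑ x ∈ Finset.univ \ insert v (G.neighborFinset v),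
          ε * w x *
            ∑ y ∈ G.neighborFinset v \ insert x (G.neighborFinset x), w' y) /
      (w' v * (1 - ε * ∑ u ∈ insert v (G.neighborFinset v), w u)) ≤
    ((∑ u ∈ G.neighborFinset v, w u) / w v) *
      Real.exp (ε * (w v - ∑ u ∈ G.neighborFinset v, w u)) := by
  generalize hW : ∑ u ∈ G.neighborFinset v, w u = W
  have hclosed : ∑ u ∈ insert v (G.neighborFinset v), w u = w v + W :=
    hW ▸ sum_insert (G.notMem_neighborFinset_self v)
  have hclosed_le : w v + W ≤ 1 :=
    hclosed ▸ hw1 ▸ sum_le_univ_sum_of_nonneg fun u => (hw u).le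
  have hden : 0 < w' v * (1 - ε * ∑ u ∈ insert v (G.neighborFinset v), w u) := by
    rw [hclosed, hw' v]
    exact mul_pos (mul_pos (hw v) (Real.exp_pos _)) (by nlinarith [hw v])
  rw [div_le_iff₀ hden, G.sum_mul_sum_sdiff_insert_neighborFinset, mul_sum, ← sum_add_distrib]
  calc ∑ y ∈ G.neighborFinset v, ((1 - ε) * w' y +
          w' y * ∑ x ∈ (univ \ insert v (G.neighborFinset v)) \ insert y (G.neighborFinset y),
            ε * w x)
      ≤ ∑ y ∈ G.neighborFinset v, w y * (Real.exp (ε * w v) * (1 - ε * (w v + W))) := by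
        refine sum_le_sum fun y hy => ?_
        rw [hw' y, ← mul_sum, ← hW]
        exact (G.neighbor_contribution_le hG w (fun u => (hw u).le) hw1 hε.le
          ((G.mem_neighborFinset v y).1 hy)).trans_eq' (by ring)
    _ = W / w v * Real.exp (ε * (w v - W)) *
          (w' v * (1 - ε * ∑ u ∈ insert v (G.neighborFinset v), w u)) := by
        rw [← sum_mul, hW, hclosed, hw' v, hW, mul_sub ε, Real.exp_sub]
        field_simp [(hw v).ne']
end

section
/- Let G be a finite simple graph, let v be a vertex of G, and let r be a real number with r ≥ d_G(v) + 1. If the graph G − v (the induced subgraph on V(G)\{v}) admits a probability distribution on its independent sets under which every vertex of G − v is covered with probability at least 1/r, then G admits a probability distribution on its independent sets under which every vertex of G (including v) is covered with probability at least 1/r. In particular, the fractional chromatic number satisfies χ_f(G) ≤ max{χ_f(G − v), d_G(v) + 1}. -/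
/-!
Lift the distribution of `G − v` to `G`. At each neighbour `u` of `v`, replace the random
independent set `I` by `I \ {u}` with a suitable probability, so that `u` becomes covered with
probability exactly `1/r` while all other coverage probabilities stay the same. By the union
bound, the independent sets missing `N(v)` then carry mass at least `1 - d(v)/r ≥ 1/r`, and
adding `v` to each of them covers `v` without uncovering any other vertex.
-/

open Finset

/-- `I` is an independent set of `G`: no two of its vertices are adjacent. -/
def IsIndepFinset {V : Type*} (G : SimpleGraph V) (I : Finset V) : Prop :=
  ∀ u ∈ I, ∀ v ∈ I, ¬ G.Adj u v

namespace IsIndepFinset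

variable {V : Type*} {G : SimpleGraph V}

theorem mono {I J : Finset V} (hJ : IsIndepFinset G J) (hIJ : I ⊆ J) : IsIndepFinset G I :=
  fun a ha b hb => hJ a (hIJ ha) b (hIJ hb)

theorem erase [DecidableEq V] {J : Finset V} (hJ : IsIndepFinset G J) (u : V) :
    IsIndepFinset G (J.erase u) :=
  hJ.mono (erase_subset u J)

theorem insert_of_forall_not_adj [DecidableEq V] {J : Finset V} {v : V}
    (hJ : IsIndepFinset G J) (hv : ∀ u ∈ J, ¬ G.Adj v u) : IsIndepFinset G (insert v J) := by
  intro a ha b hb hab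
  rcases mem_insert.1 ha with rfl | haJ <;> rcases mem_insert.1 hb with rfl | hbJ
  · exact G.irrefl hab
  · exact hv b hbJ hab
  · exact hv a haJ hab.symm
  · exact hJ a haJ b hbJ hab

theorem map_subtype {s : Set V} {I : Finset s} (hI : IsIndepFinset (G.induce s) I) :
    IsIndepFinset G (I.map (Function.Embedding.subtype _)) := by
  intro x hx y hy
  obtain ⟨a, ha, rfl⟩ := mem_map.1 hx
  obtain ⟨b, hb, rfl⟩ := mem_map.1 hy
  exact hI a ha b hb

end IsIndepFinset

namespace FractionalColoring

variable {V W : Type*} [Fintype V]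

structure IsIndepDist (G : SimpleGraph V) (p : Finset V → ℝ) : Prop where
  nonneg : ∀ I, 0 ≤ p I
  indep_of_ne_zero : ∀ I, p I ≠ 0 → IsIndepFinset G I
  sum_eq_one : ∑ I, p I = 1

def coverage [DecidableEq V] (p : Finset V → ℝ) (u : V) : ℝ :=
  ∑ I with u ∈ I, p I

def pushforward [DecidableEq W] (f : Finset V → Finset W) (p : Finset V → ℝ) (K : Finset W) :
    ℝ :=
  ∑ J with f J = K, p J

def liftSubtype [DecidableEq V] (P : V → Prop) [DecidablePred P]
    (p : Finset (Subtype P) → ℝ) : Finset V → ℝ :=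
  pushforward (map (Function.Embedding.subtype P)) p

section Coverage

variable [DecidableEq V]

theorem coverage_add (p q : Finset V → ℝ) (u : V) :
    coverage (p + q) u = coverage p u + coverage q u :=
  sum_add_distrib

theorem coverage_smul (c : ℝ) (p : Finset V → ℝ) (u : V) :
    coverage (c • p) u = c * coverage p u :=
  (mul_sum _ _ _).symm

theorem sum_le_sum_disjoint_add_sum_coverage {p : Finset V → ℝ} (hp : ∀ I, 0 ≤ p I)
    (S : Finset V) : ∑ I, p I ≤ ∑ I with Disjoint I S, p I + ∑ u ∈ S, coverage p u := by
  rw [← sum_filter_add_sum_filter_not univ (Disjoint · S)]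
  gcongr
  calc ∑ I with ¬Disjoint I S, p I
      ≤ ∑ I with ¬Disjoint I S, (#(I ∩ S) : ℝ) * p I := by
        refine sum_le_sum fun I hI => le_mul_of_one_le_left (hp I) ?_
        exact_mod_cast card_pos.2 (not_disjoint_iff_nonempty_inter.1 (mem_filter.1 hI).2)
    _ ≤ ∑ I, (#(I ∩ S) : ℝ) * p I :=
        sum_le_sum_of_subset_of_nonneg (filter_subset _ _) fun I _ _ =>
          mul_nonneg (Nat.cast_nonneg _) (hp I)
    _ = ∑ u ∈ S, coverage p u := by
        simp only [coverage, sum_filter]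
        rw [sum_comm]
        refine sum_congr rfl fun I _ => ?_
        rw [sum_ite_mem, sum_const, nsmul_eq_mul, inter_comm]

end Coverage

section Pushforward

variable [DecidableEq W] {G : SimpleGraph V} {f : Finset V → Finset W} {p : Finset V → ℝ}

theorem sum_pushforward (s : Finset (Finset W)) :
    ∑ K ∈ s, pushforward f p K = ∑ J with f J ∈ s, p J :=
  sum_fiberwise_eq_sum_filter _ _ _ _

variable [Fintype W]

theorem coverage_pushforward (u : W) :
    coverage (pushforward f p) u = ∑ J with u ∈ f J, p J := by
  rw [coverage, sum_pushforward]
  simp only [mem_filter, mem_univ, true_and]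

theorem isIndepDist_pushforward {H : SimpleGraph W} (hp : IsIndepDist G p)
    (hf : ∀ J, IsIndepFinset G J → IsIndepFinset H (f J)) :
    IsIndepDist H (pushforward f p) where
  nonneg K := sum_nonneg fun J _ => hp.nonneg J
  indep_of_ne_zero K hK := by
    obtain ⟨J, hJ, hpJ⟩ := exists_ne_zero_of_sum_ne_zero hK
    exact (mem_filter.1 hJ).2 ▸ hf J (hp.indep_of_ne_zero J hpJ)
  sum_eq_one := (sum_fiberwise univ f p).trans hp.sum_eq_one

end Pushforward

section LiftSubtype

variable [DecidableEq V] {P : V → Prop} [DecidablePred P]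

theorem isIndepDist_liftSubtype {G : SimpleGraph V} {p : Finset (Subtype P) → ℝ}
    (hp : IsIndepDist (G.induce {u | P u}) p) : IsIndepDist G (liftSubtype P p) :=
  isIndepDist_pushforward hp fun _ hJ => hJ.map_subtype

theorem coverage_liftSubtype (p : Finset (Subtype P) → ℝ) {u : V} (hu : P u) :
    coverage (liftSubtype P p) u = coverage p ⟨u, hu⟩ := by
  rw [liftSubtype, coverage_pushforward]
  refine sum_congr (filter_congr fun I _ => ?_) fun _ _ => rfl
  exact mem_map' (Function.Embedding.subtype P) (a := ⟨u, hu⟩)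

end LiftSubtype

variable {G : SimpleGraph V} {p q : Finset V → ℝ}

theorem IsIndepDist.smul_add_one_sub_smul (hp : IsIndepDist G p) (hq : IsIndepDist G q)
    {t : ℝ} (ht₀ : 0 ≤ t) (ht₁ : t ≤ 1) : IsIndepDist G (t • p + (1 - t) • q) where
  nonneg I := add_nonneg (mul_nonneg ht₀ (hp.nonneg I))
    (mul_nonneg (sub_nonneg.2 ht₁) (hq.nonneg I))
  indep_of_ne_zero I hI := by
    by_cases hpI : p I = 0
    · exact hq.indep_of_ne_zero I fun hqI => hI (by simp [hpI, hqI])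
    · exact hp.indep_of_ne_zero I hpI
  sum_eq_one := by
    simp only [Pi.add_apply, Pi.smul_apply, smul_eq_mul, sum_add_distrib, ← mul_sum,
      hp.sum_eq_one, hq.sum_eq_one]
    ring

variable [DecidableEq V]

/-- Thinning at `u`: the vertex `u` is removed with probability `1 - a / coverage p u`. -/
theorem IsIndepDist.exists_coverage_eq (hp : IsIndepDist G p) {u : V} {a : ℝ} (ha : 0 ≤ a)
    (hau : a ≤ coverage p u) :
    ∃ q, IsIndepDist G q ∧ coverage q u = a ∧ ∀ w ≠ u, coverage q w = coverage p w := by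
  have hcov : 0 ≤ coverage p u := ha.trans hau
  set t := a / coverage p u
  have ht : t * coverage p u = a := by
    rcases hcov.eq_or_lt with h | h
    · rw [← h, mul_zero]
      exact (le_antisymm (h ▸ hau) ha).symm
    · exact div_mul_cancel₀ a h.ne'
  refine ⟨t • p + (1 - t) • pushforward (fun J => J.erase u) p,
    hp.smul_add_one_sub_smul (isIndepDist_pushforward hp fun J hJ => hJ.erase u)
      (div_nonneg ha hcov) (div_le_one_of_le₀ hau hcov), ?_, fun w hw => ?_⟩
  · rw [coverage_add, coverage_smul, coverage_smul, coverage_pushforward]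
    simp only [mem_erase, ne_eq, not_true_eq_false, false_and, filter_false, sum_empty]
    rw [ht, mul_zero, add_zero]
  · have hw' : ∑ J with w ∈ J.erase u, p J = coverage p w := by
      simp only [mem_erase, ne_eq, hw, not_false_eq_true, true_and]
      rfl
    rw [coverage_add, coverage_smul, coverage_smul, coverage_pushforward, hw']
    ring

theorem IsIndepDist.exists_coverage_eqOn (hp : IsIndepDist G p) (S : Finset V) (a : V → ℝ)
    (ha : ∀ u ∈ S, 0 ≤ a u ∧ a u ≤ coverage p u) :
    ∃ q, IsIndepDist G q ∧ (∀ u ∈ S, coverage q u = a u) ∧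
      ∀ w ∉ S, coverage q w = coverage p w := by
  induction S using Finset.induction_on with
  | empty => exact ⟨p, hp, by simp, fun _ _ => rfl⟩
  | @insert x S hxS ih =>
    obtain ⟨q, hq, hqS, hq_out⟩ := ih fun u hu => ha u (mem_insert_of_mem hu)
    obtain ⟨hax, hxp⟩ := ha x (mem_insert_self x S)
    obtain ⟨q', hq', hq'x, hq'_ne⟩ := hq.exists_coverage_eq hax (hq_out x hxS ▸ hxp)
    refine ⟨q', hq', fun u hu => ?_, fun w hw => ?_⟩
    · rcases mem_insert.1 hu with rfl | hu
      · exact hq'x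
      · rw [hq'_ne u (ne_of_mem_of_not_mem hu hxS), hqS u hu]
    · rw [mem_insert, not_or] at hw
      rw [hq'_ne w hw.1, hq_out w hw.2]

theorem IsIndepDist.exists_sum_disjoint_neighborFinset_le_coverage [DecidableRel G.Adj]
    (hp : IsIndepDist G p) (v : V) :
    ∃ q, IsIndepDist G q ∧ (∀ w ≠ v, coverage q w = coverage p w) ∧
      ∑ I with Disjoint I (G.neighborFinset v), p I ≤ coverage q v := by
  let f : Finset V → Finset V := fun I =>
    if Disjoint I (G.neighborFinset v) then insert v I else I
  refine ⟨pushforward f p, isIndepDist_pushforward hp fun I hI => ?_, fun w hw => ?_, ?_⟩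
  · by_cases h : Disjoint I (G.neighborFinset v)
    · simp only [f, if_pos h]
      exact hI.insert_of_forall_not_adj fun u hu hvu =>
        disjoint_left.1 h hu ((G.mem_neighborFinset v u).2 hvu)
    · simpa only [f, if_neg h] using hI
  · rw [coverage_pushforward]
    refine sum_congr (filter_congr fun I _ => ?_) fun _ _ => rfl
    by_cases h : Disjoint I (G.neighborFinset v) <;> simp [f, h, hw]
  · rw [coverage_pushforward]
    refine sum_le_sum_of_subset_of_nonneg (fun I hI => ?_) fun I _ _ => hp.nonneg I
    simp only [mem_filter, mem_univ, true_and] at hI ⊢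
    simp [f, hI]

end FractionalColoring

open FractionalColoring

/-- if `r ≥ d_G(v) + 1` and the vertex-deleted graph `G − v` has a
probability distribution on its independent sets covering every vertex with probability
at least `1/r`, then so does `G`; in particular `χ_f(G) ≤ max{χ_f(G−v), d_G(v)+1}`. -/
theorem fracChromatic_delete_vertex {V : Type*} [Fintype V] [DecidableEq V]
    (G : SimpleGraph V) [DecidableRel G.Adj] (v : V) (r : ℝ)
    (hr : (G.degree v : ℝ) + 1 ≤ r)
    (h : ∃ p' : Finset {u : V // u ≠ v} → ℝ,
      (∀ I, 0 ≤ p' I) ∧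
      (∀ I, p' I ≠ 0 → IsIndepFinset (G.induce {u : V | u ≠ v}) I) ∧
      (∑ I : Finset {u : V // u ≠ v}, p' I) = 1 ∧
      ∀ u : {u : V // u ≠ v},
        1 / r ≤ ∑ I ∈ Finset.univ.filter (fun I : Finset {u : V // u ≠ v} => u ∈ I), p' I) :
    ∃ p : Finset V → ℝ,
      (∀ I, 0 ≤ p I) ∧
      (∀ I, p I ≠ 0 → IsIndepFinset G I) ∧
      (∑ I : Finset V, p I) = 1 ∧
      ∀ u : V, 1 / r ≤ ∑ I ∈ Finset.univ.filter (fun I : Finset V => u ∈ I), p I := by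
  obtain ⟨p', hp'_nonneg, hp'_indep, hp'_sum, hp'_cov⟩ := h
  have hr₀ : 0 < r := by linarith [(G.degree v).cast_nonneg (α := ℝ)]
  set N := G.neighborFinset v
  have hp' : IsIndepDist (G.induce {u : V | u ≠ v}) p' := ⟨hp'_nonneg, hp'_indep, hp'_sum⟩
  have hcov₀ (u : V) (hu : u ≠ v) : 1 / r ≤ coverage (liftSubtype (· ≠ v) p') u :=
    (coverage_liftSubtype p' hu).symm ▸ hp'_cov ⟨u, hu⟩
  obtain ⟨p₁, hp₁, hp₁N, hp₁_out⟩ :=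
    (isIndepDist_liftSubtype hp').exists_coverage_eqOn N (fun _ => 1 / r) fun u hu =>
      ⟨by positivity, hcov₀ u (G.ne_of_adj ((G.mem_neighborFinset v u).1 hu)).symm⟩
  obtain ⟨p, hp, hp_ne, hp_v⟩ := hp₁.exists_sum_disjoint_neighborFinset_le_coverage v
  refine ⟨p, hp.nonneg, hp.indep_of_ne_zero, hp.sum_eq_one, fun u => ?_⟩
  change 1 / r ≤ coverage p u
  rcases eq_or_ne u v with rfl | hu
  · calc 1 / r ≤ 1 - ∑ _w ∈ N, 1 / r := by
          rw [sum_const, G.card_neighborFinset_eq_degree, nsmul_eq_mul]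
          field_simp
          linarith
      _ = ∑ I, p₁ I - ∑ w ∈ N, coverage p₁ w := by
          rw [hp₁.sum_eq_one, sum_congr rfl hp₁N]
      _ ≤ ∑ I with Disjoint I N, p₁ I := by
          linarith [sum_le_sum_disjoint_add_sum_coverage hp₁.nonneg N]
      _ ≤ coverage p u := hp_v
  · rw [hp_ne u hu]
    by_cases huN : u ∈ N
    · rw [hp₁N u huN]
    · rw [hp₁_out u huN]
      exact hcov₀ u hu
end

section
/- The function f is convex on the interval [0,∞). -/
/-!
Expanding `log x = ∫₀¹ (x - 1) / (1 + t (x - 1)) dt` gives, for every `x ≥ 0`,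
`f x = ∫₀¹ (1 - t) / ((1 - t) + t x) dt`. For each fixed `t ∈ [0, 1]` the integrand is a
nonnegative multiple of the reciprocal of a positive affine function of `x`, hence convex
on `[0, ∞)`, and an integral of convex functions is convex.
-/

open MeasureTheory Set

/-- The Shearer function: `f x = ((1-x) + x·ln x)/(x-1)²` for `x ∈ (0,∞)\{1}`,
`f 1 = 1/2`, and `f x = 1` for `x ≤ 0`. -/
noncomputable def shearerF (x : ℝ) : ℝ :=
  if x ≤ 0 then 1
  else if x = 1 then 1 / 2
  else ((1 - x) + x * Real.log x) / (x - 1) ^ 2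

theorem ConvexOn.integral {E α : Type*} [AddCommGroup E] [Module ℝ E] [MeasurableSpace α]
    {μ : Measure α} {s : Set E} {g : α → E → ℝ} (hs : Convex ℝ s)
    (hg : ∀ᵐ t ∂μ, ConvexOn ℝ s (g t)) (hint : ∀ x ∈ s, Integrable (fun t => g t x) μ) :
    ConvexOn ℝ s fun x => ∫ t, g t x ∂μ := by
  refine ⟨hs, fun x hx y hy a b ha hb hab => ?_⟩
  calc ∫ t, g t (a • x + b • y) ∂μ
      ≤ ∫ t, a * g t x + b * g t y ∂μ := by
        refine integral_mono_ae (hint _ (hs hx hy ha hb hab))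
          (((hint x hx).const_mul a).add ((hint y hy).const_mul b)) ?_
        filter_upwards [hg] with t ht using ht.2 hx hy ha hb hab
    _ = a • ∫ t, g t x ∂μ + b • ∫ t, g t y ∂μ := by
        rw [integral_add ((hint x hx).const_mul a) ((hint y hy).const_mul b),
          integral_const_mul, integral_const_mul, smul_eq_mul, smul_eq_mul]

lemma convexOn_div_add_mul {c d : ℝ} (hc : 0 ≤ c) (hd : 0 ≤ d) :
    ConvexOn ℝ (Ici 0) fun x => c / (c + d * x) := by
  rcases hc.eq_or_lt with rfl | hc
  · simpa using convexOn_const (0 : ℝ) (convex_Ici 0)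
  have hinv :=
    ((convexOn_zpow (𝕜 := ℝ) (-1)).comp_affineMap (AffineMap.lineMap c (c + d))).subset
    (fun x (hx : 0 ≤ x) => by
      simp only [mem_preimage, AffineMap.lineMap_apply_ring', mem_Ioi]; nlinarith) (convex_Ici 0)
  refine (hinv.smul hc.le).congr fun x _ => ?_
  simp [AffineMap.lineMap_apply_ring', div_eq_mul_inv, mul_comm, add_comm]

lemma integrableOn_shearerF_integrand {x : ℝ} (hx : 0 ≤ x) :
    IntegrableOn (fun t => (1 - t) / ((1 - t) + t * x)) (Ioc 0 1) := by
  refine Measure.integrableOn_of_bounded (M := 1) measure_Ioc_lt_top.ne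
    (by fun_prop : Measurable _).aestronglyMeasurable ?_
  refine ae_restrict_of_forall_mem measurableSet_Ioc fun t ht => ?_
  have h1 : 0 ≤ 1 - t := by linarith [ht.2]
  have h2 : 0 ≤ t * x := mul_nonneg ht.1.le hx
  rw [Real.norm_of_nonneg (div_nonneg h1 (by linarith))]
  exact div_le_one_of_le₀ (by linarith) (by linarith)

lemma hasDerivAt_shearerF_primitive {x t : ℝ} (hx : x ≠ 1) (hu : 0 < (1 - t) + t * x) :
    HasDerivAt (fun t => (x * Real.log ((1 - t) + t * x) - ((1 - t) + t * x)) / (x - 1) ^ 2)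
      ((1 - t) / ((1 - t) + t * x)) t := by
  have hu' : HasDerivAt (fun t => (1 - t) + t * x) (x - 1) t :=
    (((hasDerivAt_id t).const_sub 1).add ((hasDerivAt_id t).mul_const x)).congr_deriv (by ring)
  refine ((((hu'.log hu.ne').const_mul x).sub hu').div_const _).congr_deriv ?_
  rw [div_eq_div_iff (pow_ne_zero 2 (sub_ne_zero.2 hx)) hu.ne', sub_mul, mul_div_assoc',
    div_mul_cancel₀ _ hu.ne']
  ring

lemma shearerF_eq_integral {x : ℝ} (hx : 0 ≤ x) :
    shearerF x = ∫ t in Ioc 0 1, (1 - t) / ((1 - t) + t * x) := by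
  rcases hx.eq_or_lt with rfl | hx
  · -- off `t = 1`, where the integrand is `0 / 0 = 0`, it is identically `1`
    simp only [mul_zero, add_zero]
    rw [integral_Ioc_eq_integral_Ioo, setIntegral_congr_fun measurableSet_Ioo
      (g := fun _ => 1) fun t ht => div_self (sub_ne_zero.2 ht.2.ne')]
    simp [shearerF]
  by_cases hx1 : x = 1
  · subst hx1
    simp only [mul_one, sub_add_cancel, div_one]
    rw [← intervalIntegral.integral_of_le zero_le_one, intervalIntegral.integral_sub
      intervalIntegrable_const intervalIntegral.intervalIntegrable_id]
    norm_num [shearerF]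
  rw [← intervalIntegral.integral_of_le zero_le_one,
    intervalIntegral.integral_eq_sub_of_hasDerivAt
      (fun t ht => hasDerivAt_shearerF_primitive hx1 ?_)
      ((intervalIntegrable_iff_integrableOn_Ioc_of_le zero_le_one).2
        (integrableOn_shearerF_integrand hx.le))]
  · simp only [shearerF, hx.not_ge, ↓reduceIte, hx1, sub_self, one_mul, zero_add, sub_zero,
      zero_mul, add_zero, Real.log_one, mul_zero, zero_sub]
    ring
  · rw [uIcc_of_le zero_le_one] at ht
    rcases ht.2.lt_or_eq with ht1 | rfl
    · nlinarith [mul_nonneg ht.1 hx.le]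
    · simpa using hx

/-- the function `f` is convex on `[0,∞)`. -/
theorem shearerF_convexOn : ConvexOn ℝ (Set.Ici (0 : ℝ)) shearerF := by
  have hconv : ConvexOn ℝ (Ici 0) fun x : ℝ => ∫ t in Ioc 0 1, (1 - t) / ((1 - t) + t * x) :=
    ConvexOn.integral (convex_Ici 0)
      (ae_restrict_of_forall_mem measurableSet_Ioc fun t ht =>
        convexOn_div_add_mul (by linarith [ht.2]) ht.1.le)
      fun _ hx => integrableOn_shearerF_integrand hx
  exact hconv.congr fun _ hx => (shearerF_eq_integral hx).symm
end

section
/- The function f is strictly monotonically decreasing on the interval [0,∞): for all real numbers x, y with 0 ≤ x < y one has f(y) < f(x). -/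
open Real Set

theorem strictMonoOn_of_deriv_pos_of_ne {D : Set ℝ} (hD : Convex ℝ D) {f : ℝ → ℝ}
    (hf : ContinuousOn f D) {c : ℝ} (hc : c ∈ D)
    (hf' : ∀ x ∈ interior D, x ≠ c → 0 < deriv f x) : StrictMonoOn f D := by
  have hleft : StrictMonoOn f (D ∩ Iic c) := by
    refine strictMonoOn_of_deriv_pos (hD.inter (convex_Iic c)) (hf.mono inter_subset_left) ?_
    rw [interior_inter, interior_Iic]
    exact fun x hx ↦ hf' x hx.1 hx.2.ne
  have hright : StrictMonoOn f (D ∩ Ici c) := by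
    refine strictMonoOn_of_deriv_pos (hD.inter (convex_Ici c)) (hf.mono inter_subset_left) ?_
    rw [interior_inter, interior_Ici]
    exact fun x hx ↦ hf' x hx.1 hx.2.ne'
  have hsplit : D ∩ Iic c ∪ D ∩ Ici c = D := by
    rw [← inter_union_distrib_left, Iic_union_Ici, inter_univ]
  exact hsplit ▸ hleft.union hright ⟨⟨hc, self_mem_Iic⟩, fun _ hx ↦ hx.2⟩
    ⟨⟨hc, self_mem_Ici⟩, fun _ hx ↦ hx.2⟩

theorem strictMonoOn_add_one_mul_log_sub_two_mul :
    StrictMonoOn (fun x ↦ (x + 1) * log x - 2 * (x - 1)) (Ioi 0) := by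
  refine strictMonoOn_of_deriv_pos_of_ne (convex_Ioi 0) ?_ (mem_Ioi.2 one_pos) ?_
  · exact ((continuousOn_id.add continuousOn_const).mul (continuousOn_log.mono
      fun x hx ↦ ne_of_gt hx)).sub (by fun_prop)
  · rw [interior_Ioi]
    intro x (hx : 0 < x) hx1
    have hderiv : HasDerivAt (fun x ↦ (x + 1) * log x - 2 * (x - 1))
        (1 * log x + (x + 1) * x⁻¹ - 2 * 1) x :=
      (((hasDerivAt_id x).add_const 1).mul (hasDerivAt_log hx.ne')).sub
        (((hasDerivAt_id x).sub_const 1).const_mul 2)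
    have hlog : log x⁻¹ < x⁻¹ - 1 := log_lt_sub_one_of_pos (inv_pos.2 hx) (inv_ne_one.2 hx1)
    rw [log_inv] at hlog
    rw [hderiv.deriv, add_mul, mul_inv_cancel₀ hx.ne']
    linarith

theorem strictMonoOn_sq_sub_one_div_two_sub_mul_log :
    StrictMonoOn (fun x ↦ (x ^ 2 - 1) / 2 - x * log x) (Ici 0) := by
  refine strictMonoOn_of_deriv_pos_of_ne (convex_Ici 0)
    (by fun_prop (disch := exact continuous_mul_log)) (mem_Ici.2 zero_le_one) ?_
  rw [interior_Ici]
  intro x (hx : 0 < x) hx1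
  have hderiv : HasDerivAt (fun x ↦ (x ^ 2 - 1) / 2 - x * log x) (x - (log x + 1)) x := by
    simpa using (((hasDerivAt_pow 2 x).sub_const 1).div_const 2).fun_sub (hasDerivAt_mul_log hx.ne')
  rw [hderiv.deriv]
  linarith [log_lt_sub_one_of_pos hx hx1]

noncomputable def shearerFormula (x : ℝ) : ℝ := ((1 - x) + x * log x) / (x - 1) ^ 2

-- This includes `x = 0`, where the formula gives `1`.
theorem shearerF_eq_shearerFormula {x : ℝ} (hx : 0 ≤ x) (hx1 : x ≠ 1) :
    shearerF x = shearerFormula x := by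
  rcases hx.eq_or_lt with rfl | hx
  · norm_num [shearerF, shearerFormula]
  · simp [shearerF, shearerFormula, not_le.2 hx, hx1]

theorem continuousOn_shearerFormula : ContinuousOn shearerFormula {1}ᶜ :=
  ((continuous_const.sub continuous_id).add continuous_mul_log).continuousOn.div (by fun_prop)
    fun _ hx ↦ pow_ne_zero 2 (sub_ne_zero.2 hx)

theorem hasDerivAt_shearerFormula {x : ℝ} (hx : 0 < x) (hx1 : x ≠ 1) :
    HasDerivAt shearerFormula (-((x + 1) * log x - 2 * (x - 1)) / (x - 1) ^ 3) x := by
  have hnum : HasDerivAt (fun x ↦ (1 - x) + x * log x) (-1 + (log x + 1)) x :=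
    ((hasDerivAt_id x).const_sub 1).add (hasDerivAt_mul_log hx.ne')
  have hden : HasDerivAt (fun x ↦ (x - 1) ^ 2) (2 * (x - 1) ^ 1 * 1) x :=
    ((hasDerivAt_id x).sub_const 1).pow 2
  have hx1' : x - 1 ≠ 0 := sub_ne_zero.2 hx1
  refine (hnum.fun_div hden (pow_ne_zero 2 hx1')).congr_deriv ?_
  field_simp
  ring

theorem deriv_shearerFormula_neg {x : ℝ} (hx : 0 < x) (hx1 : x ≠ 1) :
    deriv shearerFormula x < 0 := by
  rw [(hasDerivAt_shearerFormula hx hx1).deriv, neg_div, neg_lt_zero]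
  have hφ := strictMonoOn_add_one_mul_log_sub_two_mul (a := x) (b := 1) (mem_Ioi.2 hx)
    (mem_Ioi.2 one_pos)
  have hφ' := strictMonoOn_add_one_mul_log_sub_two_mul (a := 1) (b := x) (mem_Ioi.2 one_pos)
    (mem_Ioi.2 hx)
  simp only [log_one, mul_zero, sub_self] at hφ hφ'
  rcases hx1.lt_or_gt with hlt | hgt
  · exact div_pos_of_neg_of_neg (hφ hlt) (Odd.pow_neg (by decide) (sub_neg.2 hlt))
  · exact div_pos (hφ' hgt) (pow_pos (sub_pos.2 hgt) 3)

theorem strictAntiOn_shearerFormula_Ico : StrictAntiOn shearerFormula (Ico 0 1) := by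
  refine strictAntiOn_of_deriv_neg (convex_Ico 0 1)
    (continuousOn_shearerFormula.mono fun x hx ↦ hx.2.ne) fun x hx ↦ ?_
  rw [interior_Ico] at hx
  exact deriv_shearerFormula_neg hx.1 hx.2.ne

theorem strictAntiOn_shearerFormula_Ioi : StrictAntiOn shearerFormula (Ioi 1) := by
  refine strictAntiOn_of_deriv_neg (convex_Ioi 1)
    (continuousOn_shearerFormula.mono fun x hx ↦ ne_of_gt hx) fun x hx ↦ ?_
  rw [interior_Ioi] at hx
  exact deriv_shearerFormula_neg (one_pos.trans hx) (ne_of_gt hx)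

theorem shearerFormula_sub_half {x : ℝ} (hx1 : x ≠ 1) :
    shearerFormula x - 1 / 2 = -((x ^ 2 - 1) / 2 - x * log x) / (x - 1) ^ 2 := by
  have hx1' : x - 1 ≠ 0 := sub_ne_zero.2 hx1
  rw [shearerFormula]
  field_simp
  ring

theorem half_lt_shearerFormula {x : ℝ} (hx : x ∈ Ico 0 1) : 1 / 2 < shearerFormula x := by
  have hψ : (x ^ 2 - 1) / 2 - x * log x < 0 := by
    simpa using strictMonoOn_sq_sub_one_div_two_sub_mul_log (mem_Ici.2 hx.1)
      (mem_Ici.2 zero_le_one) hx.2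
  rw [← sub_pos, shearerFormula_sub_half hx.2.ne]
  exact div_pos (neg_pos.2 hψ) (sq_pos_of_neg (sub_neg.2 hx.2))

theorem shearerFormula_lt_half {x : ℝ} (hx : 1 < x) : shearerFormula x < 1 / 2 := by
  have hψ : 0 < (x ^ 2 - 1) / 2 - x * log x := by
    simpa using strictMonoOn_sq_sub_one_div_two_sub_mul_log (mem_Ici.2 zero_le_one)
      (mem_Ici.2 (zero_le_one.trans hx.le)) hx
  rw [← sub_neg, shearerFormula_sub_half (ne_of_gt hx)]
  exact div_neg_of_neg_of_pos (neg_neg_of_pos hψ) (pow_pos (sub_pos.2 hx) 2)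

theorem strictAntiOn_shearerF_Icc : StrictAntiOn shearerF (Icc 0 1) := by
  rw [← Ico_insert_right zero_le_one, strictAntiOn_insert_iff_of_forall_le fun _ hx ↦ hx.2.le]
  have hEq : EqOn shearerFormula shearerF (Ico 0 1) :=
    fun x hx ↦ (shearerF_eq_shearerFormula hx.1 hx.2.ne).symm
  refine ⟨fun x hx _ ↦ ?_, strictAntiOn_shearerFormula_Ico.congr hEq⟩
  rw [← hEq hx, shearerF]
  norm_num [half_lt_shearerFormula hx]

theorem strictAntiOn_shearerF_Ici : StrictAntiOn shearerF (Ici 1) := by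
  rw [← Ioi_insert, strictAntiOn_insert_iff_of_forall_ge fun _ hx ↦ (mem_Ioi.1 hx).le]
  have hEq : EqOn shearerFormula shearerF (Ioi 1) :=
    fun x hx ↦ (shearerF_eq_shearerFormula (zero_le_one.trans (le_of_lt hx)) (ne_of_gt hx)).symm
  refine ⟨fun x hx _ ↦ ?_, strictAntiOn_shearerFormula_Ioi.congr hEq⟩
  rw [← hEq hx, shearerF]
  norm_num [shearerFormula_lt_half hx]

/-- the function `f` is strictly decreasing on `[0,∞)`. -/
theorem shearerF_strictAntiOn :
    ∀ x y : ℝ, 0 ≤ x → x < y → shearerF y < shearerF x := by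
  intro x y hx hxy
  have hanti := strictAntiOn_shearerF_Icc.union strictAntiOn_shearerF_Ici
    (isGreatest_Icc zero_le_one) isLeast_Ici
  rw [Icc_union_Ici_eq_Ici zero_le_one] at hanti
  exact hanti hx (hx.trans hxy.le) hxy
end

section
/- The function f is differentiable at every point x > 0 (and continuously differentiable on (0,∞)), and its derivative satisfies the differential equation x·(x−1)·f'(x) + (x+1)·f(x) = 1 for every x > 0. -/
/-!
The numerator `g x = (1 - x) + x log x` (`shearerNum`) is analytic on `(0, ∞)` with a double
zero at `1`, so dividing it twice by `x - 1` with `dslope` yields a function `h` (`shearerExt`)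
that is analytic on `(0, ∞)` and agrees with `f` away from `1`. The differential equation for `h`
is a direct computation away from `1` and extends to `1` by continuity of `h` and `h'`. At `x = 1`
it reads `2 h 1 = 1`, so `h 1 = 1/2 = f 1`: hence `f = h` on `(0, ∞)`.
-/

open Real Filter Set Topology

section dslope

variable {𝕜 E : Type*} [NontriviallyNormedField 𝕜] [NormedAddCommGroup E] [NormedSpace 𝕜 E]
  {f : 𝕜 → E} {a b : 𝕜} {s : Set 𝕜}

theorem AnalyticAt.dslope (hf : AnalyticAt 𝕜 f b) : AnalyticAt 𝕜 (dslope f a) b := by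
  rcases eq_or_ne b a with rfl | hne
  · obtain ⟨p, hp⟩ := hf
    exact ⟨_, hp.has_fpower_series_dslope_fslope⟩
  · refine AnalyticAt.congr ?_ (dslope_eventuallyEq_slope_of_ne f hne).symm
    simp only [slope_fun_def, vsub_eq_sub]
    have hinv : AnalyticAt 𝕜 (fun z => (z - a)⁻¹) b := by
      fun_prop (disch := exact sub_ne_zero.mpr hne)
    exact hinv.smul (hf.sub analyticAt_const)

theorem AnalyticOnNhd.dslope (hf : AnalyticOnNhd 𝕜 f s) : AnalyticOnNhd 𝕜 (dslope f a) s :=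
  fun b hb => (hf b hb).dslope

end dslope

noncomputable def shearerNum (x : ℝ) : ℝ := (1 - x) + x * log x

noncomputable def shearerExt : ℝ → ℝ := dslope (dslope shearerNum 1) 1

section shearer

variable {x : ℝ}

lemma hasDerivAt_shearerNum (hx : 0 < x) : HasDerivAt shearerNum (log x) x := by
  have h := ((hasDerivAt_id' x).const_sub 1).add ((hasDerivAt_id' x).mul (hasDerivAt_log hx.ne'))
  exact h.congr_deriv (by field_simp; ring)

lemma analyticOnNhd_shearerNum : AnalyticOnNhd ℝ shearerNum (Ioi 0) := by
  intro x hx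
  have := analyticAt_log hx
  unfold shearerNum
  fun_prop

lemma analyticOnNhd_shearerExt : AnalyticOnNhd ℝ shearerExt (Ioi 0) :=
  analyticOnNhd_shearerNum.dslope.dslope

lemma shearerExt_of_ne (hx : x ≠ 1) : shearerExt x = shearerNum x / (x - 1) ^ 2 := by
  have hzero : shearerNum 1 = 0 := by simp [shearerNum]
  have hzero' : dslope shearerNum 1 1 = 0 := by
    rw [dslope_same, (hasDerivAt_shearerNum one_pos).deriv, log_one]
  have hx1 : x - 1 ≠ 0 := sub_ne_zero.mpr hx
  rw [shearerExt, dslope_of_ne _ hx, slope_def_field, hzero', dslope_of_ne _ hx,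
    slope_def_field, hzero]
  field_simp
  ring

lemma shearerExt_ode_of_ne (hx : 0 < x) (hne : x ≠ 1) :
    x * (x - 1) * deriv shearerExt x + (x + 1) * shearerExt x = 1 := by
  have hx1 : x - 1 ≠ 0 := sub_ne_zero.mpr hne
  have hloc : shearerExt =ᶠ[𝓝 x] fun y => shearerNum y / (y - 1) ^ 2 := by
    filter_upwards [eventually_ne_nhds hne] with y hy using shearerExt_of_ne hy
  have hderiv := (hasDerivAt_shearerNum hx).fun_div
    (((hasDerivAt_id' x).sub_const 1).fun_pow 2) (pow_ne_zero 2 hx1)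
  rw [hloc.deriv_eq, hderiv.deriv, shearerExt_of_ne hne, shearerNum]
  field_simp
  ring

lemma shearerExt_ode (hx : 0 < x) :
    x * (x - 1) * deriv shearerExt x + (x + 1) * shearerExt x = 1 := by
  rcases eq_or_ne x 1 with rfl | hne
  · set lhs := fun y => y * (y - 1) * deriv shearerExt y + (y + 1) * shearerExt y
    have hcont : ContinuousAt lhs 1 := by
      have h := analyticOnNhd_shearerExt 1 (mem_Ioi.mpr one_pos)
      have := h.deriv.continuousAt
      have := h.continuousAt
      fun_prop
    have hpunct : lhs =ᶠ[𝓝[≠] 1] fun _ => 1 := by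
      filter_upwards [nhdsWithin_le_nhds (Ioi_mem_nhds one_pos), self_mem_nhdsWithin]
        with y hy hne using shearerExt_ode_of_ne hy hne
    exact ((hcont.eventuallyEq_nhds_iff_eventuallyEq_nhdsNE continuousAt_const).1
      hpunct).eq_of_nhds
  · exact shearerExt_ode_of_ne hx hne

lemma shearerF_eqOn_shearerExt : EqOn shearerF shearerExt (Ioi 0) := by
  intro x hx
  rcases eq_or_ne x 1 with rfl | hne
  · have h := shearerExt_ode one_pos
    norm_num [shearerF] at h ⊢
    linarith
  · simp [shearerF, not_le.mpr (mem_Ioi.mp hx), hne, shearerExt_of_ne hne, shearerNum]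

end shearer

/-- `f` is differentiable at every `x > 0`, continuously differentiable
on `(0,∞)`, and satisfies `x(x-1)f'(x) + (x+1)f(x) = 1` for every `x > 0`. -/
theorem shearerF_differential_equation :
    (∀ x : ℝ, 0 < x → DifferentiableAt ℝ shearerF x) ∧
    ContinuousOn (deriv shearerF) (Set.Ioi (0 : ℝ)) ∧
    ∀ x : ℝ, 0 < x →
      x * (x - 1) * deriv shearerF x + (x + 1) * shearerF x = 1 := by
  have hloc : ∀ x, 0 < x → shearerF =ᶠ[𝓝 x] shearerExt := fun x hx =>
    shearerF_eqOn_shearerExt.eventuallyEq_of_mem (Ioi_mem_nhds hx)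
  have hderiv : EqOn (deriv shearerF) (deriv shearerExt) (Ioi 0) := fun x hx =>
    (hloc x hx).deriv_eq
  refine ⟨fun x hx => ?_, ?_, fun x hx => ?_⟩
  · exact (analyticOnNhd_shearerExt x hx).differentiableAt.congr_of_eventuallyEq (hloc x hx)
  · exact analyticOnNhd_shearerExt.deriv.continuousOn.congr hderiv
  · rw [hderiv hx, shearerF_eqOn_shearerExt hx]
    exact shearerExt_ode hx
end

section
/- For every real number x > 0, the derivative of the function f satisfies |x·f'(x)| < 1. -/
/-!
Away from `1`, `x f'(x) = -x ((x+1) log x - 2(x-1)) / (x-1)³`, and `-1 < x f'(x) < 0` amounts to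
the sandwich `2(x-1)/(x+1) < log x < (x-1)(x²+1)/(x(x+1))` for `x > 1`, reversed for `x < 1`.
Both gaps vanish at `1` and are strictly increasing on `(0, ∞)`: their derivatives are
`(x-1)²/(x(x+1)²)` and `(x-1)²(x²+3x+1)/(x(x+1))²`. At `1` the cubic Taylor polynomial of `log`
gives `f(1+t) = 1/2 - t/6 + O(t²)`, so `f'(1) = -1/6`.
-/

open Real Set Filter Asymptotics

lemma strictMonoOn_Ioi_of_hasDerivAt_pos_of_ne {f f' : ℝ → ℝ} {a c : ℝ} (hac : a < c)
    (hf : ∀ x ∈ Ioi a, HasDerivAt f (f' x) x) (hf' : ∀ x ∈ Ioi a, x ≠ c → 0 < f' x) :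
    StrictMonoOn f (Ioi a) := by
  have hcont : ContinuousOn f (Ioi a) := fun x hx => (hf x hx).continuousAt.continuousWithinAt
  have left : StrictMonoOn f (Ioc a c) := by
    refine strictMonoOn_of_deriv_pos (convex_Ioc a c) (hcont.mono Ioc_subset_Ioi_self) ?_
    rw [interior_Ioc]
    intro x hx
    rw [(hf x hx.1).deriv]
    exact hf' x hx.1 hx.2.ne
  have right : StrictMonoOn f (Ici c) := by
    refine strictMonoOn_of_deriv_pos (convex_Ici c) (hcont.mono (Ici_subset_Ioi.2 hac)) ?_
    rw [interior_Ici]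
    intro x hx
    have hxa : x ∈ Ioi a := hac.trans hx
    rw [(hf x hxa).deriv]
    exact hf' x hxa hx.ne'
  rw [← Ioc_union_Ici_eq_Ioi hac]
  exact left.union right ⟨right_mem_Ioc.2 hac, fun _ h => h.2⟩ ⟨self_mem_Ici, fun _ h => h⟩

lemma StrictMonoOn.sub_mul_sub_pos {f : ℝ → ℝ} {s : Set ℝ} (hf : StrictMonoOn f s) {x c : ℝ}
    (hx : x ∈ s) (hc : c ∈ s) (hxc : x ≠ c) : 0 < (x - c) * (f x - f c) := by
  rcases hxc.lt_or_gt with h | h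
  · exact mul_pos_of_neg_of_neg (sub_neg.2 h) (sub_neg.2 (hf hx hc h))
  · exact mul_pos (sub_pos.2 h) (sub_pos.2 (hf hc hx h))

lemma strictMonoOn_log_sub_two_mul_sub_one_div_add_one :
    StrictMonoOn (fun x => log x - 2 * (x - 1) / (x + 1)) (Ioi 0) := by
  refine strictMonoOn_Ioi_of_hasDerivAt_pos_of_ne one_pos
    (f' := fun x => (x - 1) ^ 2 / (x * (x + 1) ^ 2)) (fun x (hx : 0 < x) => ?_)
    (fun x (hx : 0 < x) hx1 => by have := sub_ne_zero.2 hx1; positivity)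
  have hx' : x + 1 ≠ 0 := by positivity
  refine ((hasDerivAt_log hx.ne').fun_sub ((((hasDerivAt_id' x).sub_const 1).const_mul 2).fun_div
    ((hasDerivAt_id' x).add_const 1) hx')).congr_deriv ?_
  field_simp
  ring

lemma strictMonoOn_sub_one_mul_sq_add_one_div_sub_log :
    StrictMonoOn (fun x => (x - 1) * (x ^ 2 + 1) / (x * (x + 1)) - log x) (Ioi 0) := by
  refine strictMonoOn_Ioi_of_hasDerivAt_pos_of_ne one_pos
    (f' := fun x => (x - 1) ^ 2 * (x ^ 2 + 3 * x + 1) / (x * (x + 1)) ^ 2)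
    (fun x (hx : 0 < x) => ?_)
    (fun x (hx : 0 < x) hx1 => by have := sub_ne_zero.2 hx1; positivity)
  have hpoly : HasDerivAt (fun y => (y - 1) * (y ^ 2 + 1)) (x ^ 2 + 1 + (x - 1) * (2 * x)) x := by
    refine (((hasDerivAt_id' x).sub_const 1).fun_mul
      ((hasDerivAt_pow 2 x).add_const 1)).congr_deriv ?_
    ring
  have hden : HasDerivAt (fun y => y * (y + 1)) (x + 1 + x) x := by
    refine ((hasDerivAt_id' x).fun_mul ((hasDerivAt_id' x).add_const 1)).congr_deriv ?_
    ring
  have hx' : x * (x + 1) ≠ 0 := by positivity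
  refine ((hpoly.fun_div hden hx').fun_sub (hasDerivAt_log hx.ne')).congr_deriv ?_
  field_simp
  ring

lemma sub_one_mul_add_one_mul_log_sub_pos {x : ℝ} (hx : 0 < x) (hx1 : x ≠ 1) :
    0 < (x - 1) * ((x + 1) * log x - 2 * (x - 1)) := by
  have h : 0 < (x - 1) * (log x - 2 * (x - 1) / (x + 1)) := by
    simpa using
      strictMonoOn_log_sub_two_mul_sub_one_div_add_one.sub_mul_sub_pos hx (mem_Ioi.2 one_pos) hx1
  have hx' : 0 < x + 1 := by positivity
  have e : (x + 1) * log x - 2 * (x - 1) = (x + 1) * (log x - 2 * (x - 1) / (x + 1)) := by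
    field_simp
  rw [e, mul_left_comm]
  exact mul_pos hx' h

lemma sub_one_mul_sub_one_mul_sq_add_one_sub_log_pos {x : ℝ} (hx : 0 < x) (hx1 : x ≠ 1) :
    0 < (x - 1) * ((x - 1) * (x ^ 2 + 1) - x * (x + 1) * log x) := by
  have h : 0 < (x - 1) * ((x - 1) * (x ^ 2 + 1) / (x * (x + 1)) - log x) := by
    simpa using
      strictMonoOn_sub_one_mul_sq_add_one_div_sub_log.sub_mul_sub_pos hx (mem_Ioi.2 one_pos) hx1
  have hx' : 0 < x * (x + 1) := by positivity
  have e : (x - 1) * (x ^ 2 + 1) - x * (x + 1) * log x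
      = x * (x + 1) * ((x - 1) * (x ^ 2 + 1) / (x * (x + 1)) - log x) := by
    field_simp
  rw [e, mul_left_comm]
  exact mul_pos hx' h

lemma hasDerivAt_shearerF_of_ne_one {x : ℝ} (hx : 0 < x) (hx1 : x ≠ 1) :
    HasDerivAt shearerF ((2 * (x - 1) - (x + 1) * log x) / (x - 1) ^ 3) x := by
  have hx1' : x - 1 ≠ 0 := sub_ne_zero.2 hx1
  have hq := (((hasDerivAt_id' x).const_sub 1).fun_add (hasDerivAt_mul_log hx.ne')).fun_div
    (((hasDerivAt_id' x).sub_const 1).fun_pow 2) (pow_ne_zero 2 hx1')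
  refine (hq.congr_deriv ?_).congr_of_eventuallyEq ?_
  · field_simp
    ring
  · filter_upwards [(isOpen_Ioi.inter isOpen_compl_singleton).mem_nhds ⟨hx, hx1⟩]
      with y ⟨hy, hy1⟩
    simp [shearerF, not_le.2 (show (0:ℝ) < y from hy), show y ≠ 1 from hy1]

lemma abs_mul_deriv_shearerF_lt_one_of_ne_one {x : ℝ} (hx : 0 < x) (hx1 : x ≠ 1) :
    |x * deriv shearerF x| < 1 := by
  have hlower := sub_one_mul_add_one_mul_log_sub_pos hx hx1
  have hupper := sub_one_mul_sub_one_mul_sq_add_one_sub_log_pos hx hx1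
  have ht : x - 1 ≠ 0 := sub_ne_zero.2 hx1
  have ht4 : 0 < (x - 1) ^ 4 := by positivity
  rw [(hasDerivAt_shearerF_of_ne_one hx hx1).deriv]
  have hrepr : x * ((2 * (x - 1) - (x + 1) * log x) / (x - 1) ^ 3)
      = -(x * ((x - 1) * ((x + 1) * log x - 2 * (x - 1)))) / (x - 1) ^ 4 := by
    field_simp
    ring
  rw [hrepr, abs_div, abs_neg, abs_of_pos (mul_pos hx hlower), abs_of_pos ht4, div_lt_one ht4]
  linear_combination hupper

lemma abs_log_one_add_sub_le {t : ℝ} (ht : |t| ≤ 1 / 2) :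
    |log (1 + t) - (t - t ^ 2 / 2 + t ^ 3 / 3)| ≤ 2 * t ^ 4 := by
  calc |log (1 + t) - (t - t ^ 2 / 2 + t ^ 3 / 3)|
      = |∑ i ∈ Finset.range 3, (-t) ^ (i + 1) / (i + 1) + log (1 - -t)| := by
        congr 1
        simp only [Finset.sum_range_succ, Finset.sum_range_zero, sub_neg_eq_add]
        push_cast
        ring
    _ ≤ |-t| ^ (3 + 1) / (1 - |-t|) :=
        abs_log_sub_add_sum_range_le (by rw [abs_neg]; linarith) 3
    _ ≤ 2 * t ^ 4 := by
      rw [abs_neg, div_le_iff₀ (by linarith),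
        show |t| ^ (3 + 1) = t ^ 4 from Even.pow_abs ⟨2, rfl⟩ t]
      nlinarith [pow_nonneg (sq_nonneg t) 2]

lemma abs_shearerF_one_add_sub_le {t : ℝ} (ht : |t| ≤ 1 / 2) :
    |shearerF (1 + t) - shearerF 1 - t * (-1 / 6)| ≤ 4 * t ^ 2 := by
  rcases eq_or_ne t 0 with rfl | ht0
  · simp
  have ht' := abs_le.1 ht
  have hpos : ¬1 + t ≤ 0 := by linarith
  have hne : 1 + t ≠ 1 := by simpa using ht0
  set E := log (1 + t) - (t - t ^ 2 / 2 + t ^ 3 / 3)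
  have hrepr : shearerF (1 + t) - shearerF 1 - t * (-1 / 6) = t ^ 2 / 3 + (1 + t) * E / t ^ 2 := by
    have hlog : log (1 + t) = (t - t ^ 2 / 2 + t ^ 3 / 3) + E := (add_sub_cancel _ _).symm
    simp only [shearerF, if_neg hpos, if_neg hne, if_neg (not_le.2 one_pos), ↓reduceIte, hlog]
    field_simp
    ring
  calc |shearerF (1 + t) - shearerF 1 - t * (-1 / 6)|
      ≤ |t ^ 2 / 3| + |(1 + t) * E / t ^ 2| := hrepr ▸ abs_add_le _ _
    _ = t ^ 2 / 3 + |1 + t| * |E| / t ^ 2 := by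
      rw [abs_of_nonneg (by positivity : 0 ≤ t ^ 2 / 3), abs_div, abs_mul, abs_sq]
    _ ≤ t ^ 2 / 3 + 3 / 2 * (2 * t ^ 4) / t ^ 2 := by
      gcongr
      · exact abs_le.2 ⟨by linarith, by linarith⟩
      · exact abs_log_one_add_sub_le ht
    _ = 10 / 3 * t ^ 2 := by
      field_simp
      ring
    _ ≤ 4 * t ^ 2 := by nlinarith [sq_nonneg t]

lemma hasDerivAt_shearerF_one : HasDerivAt shearerF (-1 / 6) 1 := by
  rw [hasDerivAt_iff_isLittleO_nhds_zero]
  refine (IsBigO.of_bound 4 ?_).trans_isLittleO (isLittleO_pow_id one_lt_two)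
  filter_upwards [Metric.closedBall_mem_nhds (0 : ℝ) (by norm_num : (0 : ℝ) < 1 / 2)] with t ht
  rw [Metric.mem_closedBall, dist_zero_right, Real.norm_eq_abs] at ht
  simpa [Real.norm_eq_abs, smul_eq_mul] using abs_shearerF_one_add_sub_le ht

/-- `|x·f'(x)| < 1` for every `x > 0`. -/
theorem shearerF_deriv_bound :
    ∀ x : ℝ, 0 < x → |x * deriv shearerF x| < 1 := by
  intro x hx
  rcases eq_or_ne x 1 with rfl | hx1
  · rw [hasDerivAt_shearerF_one.deriv]
    norm_num [abs_of_pos]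
  · exact abs_mul_deriv_shearerF_lt_one_of_ne_one hx hx1
end
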